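/- arXiv:2106.12019 — 5 statements merged into one kernel-verified Lean document; each statement's English description precedes it below -/
import Mathlib

section
/- Let A be the 2×2 real matrix with rows (a, b) and (c, d). There exists a nonzero vector v ∈ ℝ² with ‖Av‖ = ‖v‖ if and only if a² + b² + c² + d² ≥ 1 + (det A)². -/
/-!
For `A = !![a, b; c, d]`, `‖A v‖² - ‖v‖²` is the binary quadratic form of `AᵀA - 1`, with
coefficients `p = a² + c² - 1`, `2q = 2(ab + cd)`, `r = b² + d² - 1`. Such a form has a
nontrivial real zero iff `pr ≤ q²`, and by Lagrange's identity
`(a² + c²)(b² + d²) = (ab + cd)² + (ad - bc)²` we get `q² - pr = a² + b² + c² + d² - 1 - (det A)²`.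
-/

open Matrix

lemma norm_sq_toEuclideanLin_fin_two (a b c d : ℝ) (v : EuclideanSpace ℝ (Fin 2)) :
    ‖toEuclideanLin !![a, b; c, d] v‖ ^ 2 = (a * v 0 + b * v 1) ^ 2 + (c * v 0 + d * v 1) ^ 2 := by
  simp [EuclideanSpace.norm_sq_eq, Fin.sum_univ_two, toLpLin_apply, dotProduct]

lemma norm_toEuclideanLin_fin_two_eq_iff (a b c d : ℝ) (v : EuclideanSpace ℝ (Fin 2)) :
    ‖toEuclideanLin !![a, b; c, d] v‖ = ‖v‖ ↔
      (a ^ 2 + c ^ 2 - 1) * v 0 ^ 2 + 2 * (a * b + c * d) * v 0 * v 1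
        + (b ^ 2 + d ^ 2 - 1) * v 1 ^ 2 = 0 := by
  rw [← sq_eq_sq₀ (norm_nonneg _) (norm_nonneg _), norm_sq_toEuclideanLin_fin_two,
    EuclideanSpace.norm_sq_eq, Fin.sum_univ_two]
  simp only [Real.norm_eq_abs, sq_abs]
  constructor <;> intro h <;> linear_combination h

lemma EuclideanSpace.exists_fin_two_ne_zero_iff (P : ℝ → ℝ → Prop) :
    (∃ v : EuclideanSpace ℝ (Fin 2), v ≠ 0 ∧ P (v 0) (v 1)) ↔
      ∃ x y : ℝ, (x ≠ 0 ∨ y ≠ 0) ∧ P x y := by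
  constructor
  · rintro ⟨v, hv, hP⟩
    refine ⟨v 0, v 1, ?_, hP⟩
    contrapose! hv
    ext i
    fin_cases i <;> simp [hv.1, hv.2]
  · rintro ⟨x, y, hxy, hP⟩
    refine ⟨!₂[x, y], ?_, by simpa using hP⟩
    contrapose! hxy
    exact ⟨by simpa using congrArg (· 0) hxy, by simpa using congrArg (· 1) hxy⟩

section BinaryQuadraticForm

variable {K : Type*} [Field K] [LinearOrder K] [IsStrictOrderedRing K]

theorem le_sq_of_binary_form_eq_zero {p q r x y : K} (hxy : x ≠ 0 ∨ y ≠ 0)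
    (h : p * x ^ 2 + 2 * q * x * y + r * y ^ 2 = 0) : p * r ≤ q ^ 2 := by
  rcases eq_or_ne y 0 with rfl | hy
  · have hx : x ≠ 0 := by simpa using hxy
    have hp : p = 0 := by simpa [hx] using h
    simp [hp, sq_nonneg]
  · have hdiscrim := discrim_eq_sq_of_quadratic_eq_zero (a := p) (b := 2 * q * y) (c := r * y ^ 2)
      (x := x) (by linear_combination h)
    have hy2 : 0 < y ^ 2 := by positivity
    rw [discrim] at hdiscrim
    nlinarith [sq_nonneg (2 * p * x + 2 * q * y)]

end BinaryQuadraticForm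

theorem exists_binary_form_eq_zero_iff (p q r : ℝ) :
    (∃ x y : ℝ, (x ≠ 0 ∨ y ≠ 0) ∧ p * x ^ 2 + 2 * q * x * y + r * y ^ 2 = 0) ↔ p * r ≤ q ^ 2 := by
  refine ⟨fun ⟨x, y, hxy, h⟩ ↦ le_sq_of_binary_form_eq_zero hxy h, fun hpr ↦ ?_⟩
  rcases eq_or_ne p 0 with rfl | hp
  · exact ⟨1, 0, by simp⟩
  · obtain ⟨x, hx⟩ : ∃ x, p * (x * x) + 2 * q * x + r = 0 :=
      exists_quadratic_eq_zero hp ⟨2 * √(q ^ 2 - p * r), by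
        rw [discrim]
        linear_combination (-4) * Real.sq_sqrt (sub_nonneg.2 hpr)⟩
    exact ⟨x, 1, by simp, by linear_combination hx⟩

theorem stmt_0 (a b c d : ℝ) :
    (∃ v : EuclideanSpace ℝ (Fin 2), v ≠ 0 ∧
      ‖Matrix.toEuclideanLin !![a, b; c, d] v‖ = ‖v‖) ↔
    a ^ 2 + b ^ 2 + c ^ 2 + d ^ 2 ≥ 1 + (Matrix.det !![a, b; c, d]) ^ 2 := by
  simp_rw [norm_toEuclideanLin_fin_two_eq_iff]
  rw [EuclideanSpace.exists_fin_two_ne_zero_iff (fun x y ↦ _ * x ^ 2 + _ * x * y + _ * y ^ 2 = 0),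
    exists_binary_form_eq_zero_iff, det_fin_two_of]
  have lagrange : (a * b + c * d) ^ 2 - (a ^ 2 + c ^ 2 - 1) * (b ^ 2 + d ^ 2 - 1)
      = a ^ 2 + b ^ 2 + c ^ 2 + d ^ 2 - 1 - (a * d - b * c) ^ 2 := by ring
  constructor <;> intro h <;> linarith
end

section
/- The Diophantine equation 39x² + 48xy + 39y² = u² has no nontrivial integer solutions: if x, y, u are integers with 39x² + 48xy + 39y² = u², then x = 0 and y = 0 (and hence u = 0). -/
/-!
A solution is divisible by 3 in every coordinate, and dividing by 3 gives a solution again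
(the equation is homogeneous of degree 2), so `3 ^ k` divides `x`, `y` and `u` for every `k`.
Divisibility by 3 is a congruence argument modulo 27: `3 ∣ u`, then `9 ∣ 39x² + 48xy + 39y²`
forces `x ≡ y [ZMOD 3]`, and writing `y = x + 3t`, `u = 3v` turns the equation into
`v² = 14x² + 42xt + 39t²`, where `v² ≡ 2x² [ZMOD 3]` forces `3 ∣ x` and `3 ∣ v`.
-/

theorem Int.eq_zero_of_forall_pow_dvd {p x : ℤ} (hp : 2 ≤ p.natAbs) (h : ∀ k : ℕ, p ^ k ∣ x) :
    x = 0 :=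
  Int.eq_zero_of_dvd_of_natAbs_lt_natAbs (h x.natAbs) <| by
    rw [Int.natAbs_pow]
    exact Nat.lt_pow_self hp

lemma zmod27_cast_eq_zero_of_sq_eq :
    ∀ a b c : ZMod 27, 39 * a ^ 2 + 48 * a * b + 39 * b ^ 2 = c ^ 2 →
      ZMod.castHom (by norm_num : 3 ∣ 27) (ZMod 3) a = 0 ∧
      ZMod.castHom (by norm_num : 3 ∣ 27) (ZMod 3) b = 0 ∧
      ZMod.castHom (by norm_num : 3 ∣ 27) (ZMod 3) c = 0 := by
  decide

lemma three_dvd_of_sq_eq {x y u : ℤ} (h : 39 * x ^ 2 + 48 * x * y + 39 * y ^ 2 = u ^ 2) :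
    3 ∣ x ∧ 3 ∣ y ∧ 3 ∣ u := by
  have h27 : 39 * (x : ZMod 27) ^ 2 + 48 * x * y + 39 * y ^ 2 = (u : ZMod 27) ^ 2 := by
    exact_mod_cast congrArg (Int.cast : ℤ → ZMod 27) h
  obtain ⟨hx, hy, hu⟩ := zmod27_cast_eq_zero_of_sq_eq x y u h27
  simp only [map_intCast, ZMod.intCast_zmod_eq_zero_iff_dvd] at hx hy hu
  exact ⟨hx, hy, hu⟩

lemma pow_three_dvd_of_sq_eq (k : ℕ) {x y u : ℤ}
    (h : 39 * x ^ 2 + 48 * x * y + 39 * y ^ 2 = u ^ 2) :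
    3 ^ k ∣ x ∧ 3 ^ k ∣ y ∧ 3 ^ k ∣ u := by
  induction k generalizing x y u with
  | zero => simp
  | succ k ih =>
    obtain ⟨⟨a, rfl⟩, ⟨b, rfl⟩, ⟨c, rfl⟩⟩ := three_dvd_of_sq_eq h
    have hsol : 39 * a ^ 2 + 48 * a * b + 39 * b ^ 2 = c ^ 2 := by linarith
    obtain ⟨ha, hb, hc⟩ := ih hsol
    rw [pow_succ']
    exact ⟨mul_dvd_mul_left 3 ha, mul_dvd_mul_left 3 hb, mul_dvd_mul_left 3 hc⟩

theorem stmt_1 (x y u : ℤ) (h : 39 * x ^ 2 + 48 * x * y + 39 * y ^ 2 = u ^ 2) :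
    x = 0 ∧ y = 0 ∧ u = 0 := by
  have h3 := fun k => pow_three_dvd_of_sq_eq k h
  have eq_zero {z : ℤ} := Int.eq_zero_of_forall_pow_dvd (p := 3) (x := z) (by decide)
  exact ⟨eq_zero fun k => (h3 k).1, eq_zero fun k => (h3 k).2.1, eq_zero fun k => (h3 k).2.2⟩
end

section
/- Let A be the 2×2 matrix with integer entries and rows (a, b), (c, d), and set m = a² + c², n = b² + d², p = ab + cd. Assume n ≠ 1. Then there exists a nonzero vector v ∈ ℤ² with ‖Av‖ = ‖v‖ if and only if p² − (m − 1)(n − 1) is a perfect square (i.e., equals k² for some integer k). -/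
/-!
For an integer vector v = (x, y), the condition ‖Av‖ = ‖v‖ reads
(m - 1)x² + 2pxy + (n - 1)y² = 0, so the question is whether this binary quadratic form
represents zero nontrivially. Completing the square, ((m - 1)x + py)² = (p² - (m - 1)(n - 1))y²,
which forces the discriminant to be a square; conversely a square root k of the discriminant gives
the explicit zero (k - p, m - 1).
-/

open Matrix

theorem norm_toEuclideanLin_eq_norm_iff {ι : Type*} [Fintype ι] [DecidableEq ι]
    (A : Matrix ι ι ℝ) (u : EuclideanSpace ℝ ι) :
    ‖toEuclideanLin A u‖ = ‖u‖ ↔ ∑ i, (A *ᵥ u.ofLp) i ^ 2 = ∑ i, u.ofLp i ^ 2 := by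
  rw [← sq_eq_sq₀ (norm_nonneg _) (norm_nonneg _), EuclideanSpace.norm_sq_eq,
    EuclideanSpace.norm_sq_eq, toLpLin_apply]
  simp only [Real.norm_eq_abs, sq_abs]

theorem norm_toEuclideanLin_intCast_eq_norm_iff (a b c d : ℤ) (v : Fin 2 → ℤ) :
    ‖toEuclideanLin !![(a : ℝ), (b : ℝ); (c : ℝ), (d : ℝ)]
        ((WithLp.equiv 2 (Fin 2 → ℝ)).symm (fun i => (v i : ℝ)))‖ =
      ‖(WithLp.equiv 2 (Fin 2 → ℝ)).symm (fun i => (v i : ℝ))‖ ↔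
    (a * v 0 + b * v 1) ^ 2 + (c * v 0 + d * v 1) ^ 2 = v 0 ^ 2 + v 1 ^ 2 := by
  rw [norm_toEuclideanLin_eq_norm_iff]
  simp only [Fin.sum_univ_two, mulVec_fin_two, WithLp.equiv_symm_apply, WithLp.ofLp_toLp,
    of_apply, cons_val', cons_val_zero, cons_val_one, empty_val', cons_val_fin_one]
  exact_mod_cast Iff.rfl

theorem exists_quadForm_eq_zero_iff_exists_sq (α β γ : ℤ) :
    (∃ x y : ℤ, (x, y) ≠ 0 ∧ α * x ^ 2 + 2 * β * x * y + γ * y ^ 2 = 0) ↔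
      ∃ k : ℤ, β ^ 2 - α * γ = k ^ 2 := by
  constructor
  · rintro ⟨x, y, hxy, hQ⟩
    by_cases hy : y = 0
    · subst hy
      have hx : x ≠ 0 := by simpa using hxy
      have hα : α = 0 := by simpa [hx] using hQ
      exact ⟨β, by simp [hα]⟩
    · have hsq : (α * x + β * y) ^ 2 = (β ^ 2 - α * γ) * y ^ 2 := by
        linear_combination α * hQ
      obtain ⟨k, hk⟩ : y ∣ α * x + β * y :=
        (Int.pow_dvd_pow_iff two_ne_zero).mp ⟨_, hsq.trans (mul_comm _ _)⟩
      refine ⟨k, mul_right_cancel₀ (pow_ne_zero 2 hy) ?_⟩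
      rw [← hsq, hk]
      ring
  · rintro ⟨k, hk⟩
    by_cases hα : α = 0
    · exact ⟨1, 0, by simp, by simp [hα]⟩
    · exact ⟨k - β, α, by simp [hα], by linear_combination -α * hk⟩

theorem stmt_5_general (a b c d : ℤ) (m n p : ℤ)
    (hm : m = a ^ 2 + c ^ 2) (hn : n = b ^ 2 + d ^ 2) (hp : p = a * b + c * d) :
    (∃ v : Fin 2 → ℤ, v ≠ 0 ∧
      ‖Matrix.toEuclideanLin !![(a : ℝ), (b : ℝ); (c : ℝ), (d : ℝ)]
          ((WithLp.equiv 2 (Fin 2 → ℝ)).symm (fun i => (v i : ℝ)))‖ =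
        ‖(WithLp.equiv 2 (Fin 2 → ℝ)).symm (fun i => (v i : ℝ))‖) ↔
    ∃ k : ℤ, p ^ 2 - (m - 1) * (n - 1) = k ^ 2 := by
  subst hm hn hp
  rw [← exists_quadForm_eq_zero_iff_exists_sq]
  simp only [norm_toEuclideanLin_intCast_eq_norm_iff]
  constructor
  · rintro ⟨v, hv, h⟩
    refine ⟨v 0, v 1, ?_, by linear_combination h⟩
    contrapose! hv
    ext i; fin_cases i <;> simp_all
  · rintro ⟨x, y, hxy, h⟩
    refine ⟨![x, y], ?_, ?_⟩
    · contrapose! hxy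
      simpa using congrFun hxy
    simp only [cons_val_zero, cons_val_one]
    linear_combination h

theorem stmt_5 (a b c d : ℤ) (m n p : ℤ)
    (hm : m = a ^ 2 + c ^ 2) (hn : n = b ^ 2 + d ^ 2) (hp : p = a * b + c * d)
    (hn1 : n ≠ 1) :
    (∃ v : Fin 2 → ℤ, v ≠ 0 ∧
      ‖Matrix.toEuclideanLin !![(a : ℝ), (b : ℝ); (c : ℝ), (d : ℝ)]
          ((WithLp.equiv 2 (Fin 2 → ℝ)).symm (fun i => (v i : ℝ)))‖ =
        ‖(WithLp.equiv 2 (Fin 2 → ℝ)).symm (fun i => (v i : ℝ))‖) ↔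
    ∃ k : ℤ, p ^ 2 - (m - 1) * (n - 1) = k ^ 2 :=
  stmt_5_general a b c d m n p hm hn hp
end

section
/- Let A be the 3×3 real matrix with rows (1, 1, 1/2), (1, 1/2, 1), (1/2, 1, 1). Then there is no nonzero vector v ∈ ℤ³ with ‖Av‖ = ‖v‖. -/
/-!
With `A` the given matrix, `A² - I` has diagonal entries `5/4` and off-diagonal entries `2`, so
`‖Av‖ = ‖v‖` means `5 (x² + y² + z²) + 16 (xy + yz + zx) = 0` for `v = (x, y, z)`. Such an integer
solution has `4 ∣ x² + y² + z²`, which forces `x, y, z` to be even, and halving gives a smaller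
solution; by infinite descent only `v = 0` remains.
-/

namespace Int

theorem two_dvd_of_four_dvd_sq_add_sq_add_sq {a b c : ℤ} (h : 4 ∣ a ^ 2 + b ^ 2 + c ^ 2) :
    2 ∣ a ∧ 2 ∣ b ∧ 2 ∣ c := by
  have key : ∀ a b c : ZMod 4, a ^ 2 + b ^ 2 + c ^ 2 = 0 → 2 * a = 0 ∧ 2 * b = 0 ∧ 2 * c = 0 := by
    decide
  have h4 : (a : ZMod 4) ^ 2 + (b : ZMod 4) ^ 2 + (c : ZMod 4) ^ 2 = 0 := by
    exact_mod_cast (ZMod.intCast_zmod_eq_zero_iff_dvd _ 4).2 h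
  have two_dvd {x : ℤ} (hx : 2 * (x : ZMod 4) = 0) : 2 ∣ x := by
    have : (4 : ℤ) ∣ 2 * x := (ZMod.intCast_zmod_eq_zero_iff_dvd _ 4).1 (by exact_mod_cast hx)
    omega
  obtain ⟨ha, hb, hc⟩ := key _ _ _ h4
  exact ⟨two_dvd ha, two_dvd hb, two_dvd hc⟩

theorem eq_zero_of_forall_two_pow_dvd {n : ℤ} (h : ∀ k : ℕ, 2 ^ k ∣ n) : n = 0 :=
  eq_zero_of_dvd_of_natAbs_lt_natAbs (h n.natAbs) (by simpa using Nat.lt_two_pow_self)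

end Int

theorem eq_zero_of_forall_eq_two_smul {ι : Type*} {P : (ι → ℤ) → Prop}
    (h : ∀ v, P v → ∃ w, P w ∧ v = 2 • w) {v : ι → ℤ} (hv : P v) : v = 0 := by
  have two_pow_dvd (k : ℕ) : ∀ v, P v → ∀ i, 2 ^ k ∣ v i := by
    induction k with
    | zero => simp
    | succ k ih =>
      intro v hv i
      obtain ⟨w, hw, rfl⟩ := h v hv
      simpa [pow_succ'] using mul_dvd_mul_left 2 (ih w hw i)
  funext i
  exact Int.eq_zero_of_forall_two_pow_dvd fun k => two_pow_dvd k v hv i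

-- `4 (‖A v‖² - ‖v‖²)` for the matrix `A` of the theorem
def defectForm {R : Type*} [CommRing R] (v : Fin 3 → R) : R :=
  5 * (v 0 ^ 2 + v 1 ^ 2 + v 2 ^ 2) + 16 * (v 0 * v 1 + v 1 * v 2 + v 2 * v 0)

theorem defectForm_two_smul {R : Type*} [CommRing R] (v : Fin 3 → R) :
    defectForm (2 • v) = 4 * defectForm v := by
  simp only [defectForm, Pi.smul_apply, nsmul_eq_mul]
  ring

@[simp, norm_cast]
theorem Int.cast_defectForm {R : Type*} [CommRing R] (v : Fin 3 → ℤ) :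
    ((defectForm v : ℤ) : R) = defectForm fun i => (v i : R) := by
  simp [defectForm]

theorem two_dvd_of_defectForm_eq_zero {v : Fin 3 → ℤ} (hv : defectForm v = 0) (i : Fin 3) :
    2 ∣ v i := by
  have h4 : 4 ∣ v 0 ^ 2 + v 1 ^ 2 + v 2 ^ 2 := by
    unfold defectForm at hv
    omega
  obtain ⟨h0, h1, h2⟩ := Int.two_dvd_of_four_dvd_sq_add_sq_add_sq h4
  fin_cases i <;> assumption

theorem eq_zero_of_defectForm_eq_zero {v : Fin 3 → ℤ} (hv : defectForm v = 0) : v = 0 := by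
  refine eq_zero_of_forall_eq_two_smul (P := fun v => defectForm v = 0) (fun v hv => ?_) hv
  choose w hw using two_dvd_of_defectForm_eq_zero hv
  have hvw : v = 2 • w := funext fun i => by simp [hw i]
  refine ⟨w, ?_, hvw⟩
  rw [hvw, defectForm_two_smul] at hv
  simpa using hv

theorem four_mul_norm_sq_sub_norm_sq (x : Fin 3 → ℝ) :
    4 * (‖Matrix.toEuclideanLin !![(1 : ℝ), 1, 1/2; 1, 1/2, 1; 1/2, 1, 1] (WithLp.toLp 2 x)‖ ^ 2
      - ‖WithLp.toLp 2 x‖ ^ 2) = defectForm x := by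
  simp only [Matrix.toLpLin_apply, EuclideanSpace.real_norm_sq_eq, Fin.sum_univ_three,
    Matrix.mulVec, dotProduct, defectForm, Matrix.of_apply, Matrix.cons_val', Matrix.cons_val_zero,
    Matrix.cons_val_fin_one, Matrix.cons_val_one, Matrix.cons_val]
  ring

theorem stmt_10 :
    ¬∃ v : Fin 3 → ℤ, v ≠ 0 ∧
      ‖Matrix.toEuclideanLin !![(1 : ℝ), 1, 1/2; 1, 1/2, 1; 1/2, 1, 1]
          ((WithLp.equiv 2 (Fin 3 → ℝ)).symm (fun i => (v i : ℝ)))‖ =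
        ‖(WithLp.equiv 2 (Fin 3 → ℝ)).symm (fun i => (v i : ℝ))‖ := by
  rintro ⟨v, hv, h⟩
  have hreal := four_mul_norm_sq_sub_norm_sq fun i => (v i : ℝ)
  rw [← WithLp.equiv_symm_apply, h, sub_self, mul_zero, ← Int.cast_defectForm] at hreal
  exact hv (eq_zero_of_defectForm_eq_zero (Int.cast_eq_zero.1 hreal.symm))
end

section
/- Let A be the 3×3 real matrix with rows (1, 2, 3), (2, 1, 1), (1, 1, 1). Then for all integers v and r and for each choice of sign ε ∈ {+1, −1}, the vector w = ((r² − 10v² + 4εvr)/10, −(14v² + r²)/10, 2v²) ∈ ℝ³ satisfies ‖Aw‖ = ‖w‖. -/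
theorem stmt_12 (v r : ℤ) (ε : ℝ) (hε : ε = 1 ∨ ε = -1) :
    ‖Matrix.toEuclideanLin !![(1 : ℝ), 2, 3; 2, 1, 1; 1, 1, 1]
        ((WithLp.equiv 2 (Fin 3 → ℝ)).symm
          ![((r : ℝ) ^ 2 - 10 * (v : ℝ) ^ 2 + 4 * ε * (v : ℝ) * (r : ℝ)) / 10,
            -(14 * (v : ℝ) ^ 2 + (r : ℝ) ^ 2) / 10,
            2 * (v : ℝ) ^ 2])‖ =
      ‖(WithLp.equiv 2 (Fin 3 → ℝ)).symm
          ![((r : ℝ) ^ 2 - 10 * (v : ℝ) ^ 2 + 4 * ε * (v : ℝ) * (r : ℝ)) / 10,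
            -(14 * (v : ℝ) ^ 2 + (r : ℝ) ^ 2) / 10,
            2 * (v : ℝ) ^ 2]‖ := by
  rw [EuclideanSpace.norm_eq, EuclideanSpace.norm_eq]
  congr 1
  simp [Matrix.toEuclideanLin_apply, Matrix.mulVec, dotProduct,
    Fin.sum_univ_succ]
  rcases hε with h | h <;> subst h <;> ring
end
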